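/- Let N and L be positive integers. Let x ∈ {0,1}^N be a binary vector and y ∈ ℝ^N with 0 ≤ y_k ≤ 1 for all k. If x and y have the same FROG trace, i.e. |∑_{k=0}^{N−1} x_k x_{(k+mL) mod N} e^{−2πikn/N}|² = |∑_{k=0}^{N−1} y_k y_{(k+mL) mod N} e^{−2πikn/N}|² for all n = 0,…,N−1 and m = 0,…,⌈N/L⌉−1, then y_k ∈ {0,1} for all k and ‖y‖₀ = ‖x‖₀. -/

import Mathlib

open scoped BigOperators
open Finset

/-- Discrete Fourier transform of `x ∈ ℂ^N`. -/
noncomputable def dft {N : ℕ} (x : Fin N → ℂ) (n : Fin N) : ℂ :=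
  ∑ k : Fin N, x k * Complex.exp (-2 * Real.pi * Complex.I * ((k : ℕ) : ℂ) * ((n : ℕ) : ℂ) / (N : ℂ))

/-- Inverse discrete Fourier transform. -/
noncomputable def idft {N : ℕ} (u : Fin N → ℂ) (j : Fin N) : ℂ :=
  (1 / (N : ℂ)) * ∑ n : Fin N, u n * Complex.exp (2 * Real.pi * Complex.I * ((j : ℕ) : ℂ) * ((n : ℕ) : ℂ) / (N : ℂ))

/-- `M`-point oversampled discrete Fourier transform of `x ∈ ℂ^N`. -/
noncomputable def odft {N : ℕ} (M : ℕ) (x : Fin N → ℂ) (n : Fin M) : ℂ :=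
  ∑ k : Fin N, x k * Complex.exp (-2 * Real.pi * Complex.I * ((k : ℕ) : ℂ) * ((n : ℕ) : ℂ) / (M : ℂ))

/-- Periodic autocorrelation of `x ∈ ℂ^N`. -/
noncomputable def autp {N : ℕ} (x : Fin N → ℂ) (j : Fin N) : ℂ :=
  ∑ k : Fin N, x (k + j) * (starRingEnd ℂ) (x k)

/-- Extension of `x ∈ ℂ^N` to `ℤ` by zero. -/
noncomputable def extz {N : ℕ} (x : Fin N → ℂ) (i : ℤ) : ℂ :=
  if h : 0 ≤ i ∧ i < (N : ℤ) then x ⟨i.toNat, by omega⟩ else 0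

/-- (Regular) autocorrelation of `x ∈ ℂ^N`, as a function on `ℤ`. -/
noncomputable def aut {N : ℕ} (x : Fin N → ℂ) (j : ℤ) : ℂ :=
  ∑ k : Fin N, extz x (((k : ℕ) : ℤ) + j) * (starRingEnd ℂ) (extz x ((k : ℕ) : ℤ))

/-- Circular convolution on `ℂ^N`. -/
noncomputable def cconv {N : ℕ} (v x : Fin N → ℂ) (j : Fin N) : ℂ :=
  ∑ k : Fin N, v k * x (j - k)

/-- The ℓ² norm on `ℂ^N`. -/
noncomputable def l2 {N : ℕ} (x : Fin N → ℂ) : ℝ :=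
  Real.sqrt (∑ k : Fin N, ‖x k‖ ^ 2)

/-- The circular finite-difference operator. -/
noncomputable def nabla {N : ℕ} [NeZero N] (x : Fin N → ℂ) (k : Fin N) : ℂ :=
  x (k + 1) - x k

/-- The sup norm on `ℂ^N`. -/
noncomputable def linf {N : ℕ} [NeZero N] (x : Fin N → ℂ) : ℝ :=
  Finset.univ.sup' Finset.univ_nonempty (fun k => ‖x k‖)

/-- The sup norm on `ℝ^N`. -/
noncomputable def linfR {N : ℕ} [NeZero N] (x : Fin N → ℝ) : ℝ :=
  Finset.univ.sup' Finset.univ_nonempty (fun k => |x k|)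

/-- Cyclic index shift: `k ↦ (k + s) mod N`. -/
def shiftIdx {N : ℕ} [NeZero N] (k : Fin N) (s : ℕ) : Fin N :=
  ⟨((k : ℕ) + s) % N, Nat.mod_lt _ (Nat.pos_of_ne_zero (NeZero.ne N))⟩

/-- A window of length `W` with constant value `a`, extended by zero. -/
noncomputable def win (W : ℕ) (a : ℂ) (i : ℤ) : ℂ :=
  if 0 ≤ i ∧ i < (W : ℤ) then a else 0

/-!
Only the row `m = 0` of the trace is needed: it consists of the Fourier magnitudes of the
squared signal. Its entry at frequency `0` gives `∑ y_k² = ∑ x_k²`, and Parseval gives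
`∑ y_k⁴ = ∑ x_k⁴`. For binary `x` these two sums agree, so `∑ y_k² (1 - y_k²) = 0`; each term is
nonnegative when `0 ≤ y_k ≤ 1`, which forces `y_k ∈ {0, 1}`, and then
`‖y‖₀ = ∑ y_k² = ∑ x_k² = ‖x‖₀`.
-/

open Complex ComplexConjugate
open scoped Real

lemma IsPrimitiveRoot.sum_pow_mul_inv_pow {K : Type*} [Field K] {ζ : K} {N : ℕ}
    (hζ : IsPrimitiveRoot ζ N) (k j : Fin N) :
    ∑ n : Fin N, (ζ ^ (k : ℕ)) ^ (n : ℕ) * ((ζ ^ (j : ℕ)) ^ (n : ℕ))⁻¹ =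
      if k = j then (N : K) else 0 := by
  have hζ0 : ζ ≠ 0 := hζ.ne_zero k.pos.ne'
  have hterm (n : ℕ) :
      (ζ ^ (k : ℕ)) ^ n * ((ζ ^ (j : ℕ)) ^ n)⁻¹ = (ζ ^ (k : ℕ) * (ζ ^ (j : ℕ))⁻¹) ^ n := by
    rw [mul_pow, inv_pow]
  simp only [hterm]
  rw [Fin.sum_univ_eq_sum_range (fun n => (ζ ^ (k : ℕ) * (ζ ^ (j : ℕ))⁻¹) ^ n)]
  split_ifs with hkj
  · simp [hkj, hζ0]
  · have hne : ζ ^ (k : ℕ) * (ζ ^ (j : ℕ))⁻¹ ≠ 1 := by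
      rw [Ne, mul_inv_eq_one₀ (pow_ne_zero _ hζ0)]
      exact fun h => hkj (Fin.ext (hζ.pow_inj k.isLt j.isLt h))
    rw [geom_sum_eq hne, mul_pow, inv_pow, ← pow_mul, ← pow_mul, mul_comm (k : ℕ),
      mul_comm (j : ℕ), pow_mul, pow_mul, hζ.pow_eq_one]
    simp

lemma dft_eq_sum_pow {N : ℕ} (u : Fin N → ℂ) (n : Fin N) :
    dft u n = ∑ k : Fin N, u k * (exp (-2 * π * I / N) ^ (k : ℕ)) ^ (n : ℕ) := by
  refine Finset.sum_congr rfl fun k _ => ?_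
  rw [← pow_mul, ← exp_nat_mul]
  push_cast
  ring_nf

lemma isPrimitiveRoot_exp_neg {N : ℕ} (hN : N ≠ 0) :
    IsPrimitiveRoot (exp (-2 * π * I / N)) N := by
  simpa [neg_mul, neg_div, exp_neg] using (isPrimitiveRoot_exp N hN).inv

theorem sum_norm_sq_dft {N : ℕ} (u : Fin N → ℂ) :
    ∑ n : Fin N, ‖dft u n‖ ^ 2 = N * ∑ k : Fin N, ‖u k‖ ^ 2 := by
  obtain rfl | hN := eq_or_ne N 0
  · simp
  apply Complex.ofReal_injective
  push_cast
  simp_rw [← mul_conj', dft_eq_sum_pow, map_sum, map_mul]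
  set ζ := exp (-2 * π * I / N)
  have hζ : IsPrimitiveRoot ζ N := isPrimitiveRoot_exp_neg hN
  have hconj (j n : Fin N) :
      conj ((ζ ^ (j : ℕ)) ^ (n : ℕ)) = ((ζ ^ (j : ℕ)) ^ (n : ℕ))⁻¹ := by
    exact (inv_eq_conj (by rw [norm_pow, norm_pow, hζ.norm'_eq_one hN, one_pow, one_pow])).symm
  simp_rw [hconj, Finset.sum_mul_sum]
  calc ∑ n : Fin N, ∑ k : Fin N, ∑ j : Fin N,
        u k * (ζ ^ (k : ℕ)) ^ (n : ℕ) * (conj (u j) * ((ζ ^ (j : ℕ)) ^ (n : ℕ))⁻¹)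
      = ∑ k : Fin N, ∑ j : Fin N, u k * conj (u j) *
          ∑ n : Fin N, (ζ ^ (k : ℕ)) ^ (n : ℕ) * ((ζ ^ (j : ℕ)) ^ (n : ℕ))⁻¹ := by
        rw [Finset.sum_comm]
        refine Finset.sum_congr rfl fun k _ => ?_
        rw [Finset.sum_comm]
        simp only [Finset.mul_sum]
        refine Finset.sum_congr rfl fun j _ => Finset.sum_congr rfl fun n _ => ?_
        ring
    _ = N * ∑ k : Fin N, u k * conj (u k) := by
        simp [hζ.sum_pow_mul_inv_pow, Finset.mul_sum, mul_comm]

lemma dft_zero {N : ℕ} [NeZero N] (u : Fin N → ℂ) : dft u 0 = ∑ k : Fin N, u k := by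
  simp [dft]

lemma norm_sum_eq_of_norm_dft_eq {N : ℕ} [NeZero N] {u v : Fin N → ℂ}
    (h : ∀ n, ‖dft u n‖ = ‖dft v n‖) :
    ‖∑ k : Fin N, u k‖ = ‖∑ k : Fin N, v k‖ := by
  simpa [dft_zero] using h 0

lemma sum_norm_sq_eq_of_norm_dft_eq {N : ℕ} [NeZero N] {u v : Fin N → ℂ}
    (h : ∀ n, ‖dft u n‖ = ‖dft v n‖) :
    ∑ k : Fin N, ‖u k‖ ^ 2 = ∑ k : Fin N, ‖v k‖ ^ 2 := by
  have hN : (N : ℝ) ≠ 0 := Nat.cast_ne_zero.mpr (NeZero.ne N)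
  refine mul_left_cancel₀ hN ?_
  simp only [← sum_norm_sq_dft, h]

lemma eq_zero_or_one_of_sum_pow_four_eq_sum_sq {ι : Type*} [Fintype ι] {y : ι → ℝ}
    (hy : ∀ k, 0 ≤ y k ∧ y k ≤ 1) (h : ∑ k, y k ^ 4 = ∑ k, y k ^ 2) (k : ι) :
    y k = 0 ∨ y k = 1 := by
  have hfactor (i : ι) : y i ^ 2 - y i ^ 4 = y i ^ 2 * (1 - y i) * (1 + y i) := by ring
  have hnonneg (i : ι) : 0 ≤ y i ^ 2 - y i ^ 4 := by
    rw [hfactor]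
    have := hy i
    apply mul_nonneg (mul_nonneg (sq_nonneg _) _) <;> linarith
  have hsum : ∑ i, (y i ^ 2 - y i ^ 4) = 0 := by rw [Finset.sum_sub_distrib, h, sub_self]
  have hk :=
    (Finset.sum_eq_zero_iff_of_nonneg fun i _ => hnonneg i).mp hsum k (Finset.mem_univ k)
  rw [hfactor] at hk
  rcases mul_eq_zero.mp hk with hk | hk
  · rcases mul_eq_zero.mp hk with hk | hk
    · exact Or.inl (pow_eq_zero_iff two_ne_zero |>.mp hk)
    · exact Or.inr (by linarith)
  · have := hy k
    exact Or.inl (by linarith)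

open scoped Classical in
lemma card_filter_ne_zero_eq_sum_sq {ι : Type*} [Fintype ι] {x : ι → ℝ}
    (hx : ∀ k, x k = 0 ∨ x k = 1) :
    ((Finset.univ.filter fun k => x k ≠ 0).card : ℝ) = ∑ k, x k ^ 2 := by
  rw [Finset.card_filter]
  push_cast
  refine Finset.sum_congr rfl fun k _ => ?_
  rcases hx k with hk | hk <;> simp [hk]

lemma shiftIdx_zero {N : ℕ} [NeZero N] (k : Fin N) : shiftIdx k 0 = k :=
  Fin.ext (Nat.mod_eq_of_lt k.isLt)

open scoped Classical in
/-- box relaxation for binary signals under the FROG trace. -/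
theorem box_to_binary_frog {N L : ℕ} [NeZero N] (hL : 0 < L) (x y : Fin N → ℝ)
    (hx : ∀ k, x k = 0 ∨ x k = 1) (hy : ∀ k, 0 ≤ y k ∧ y k ≤ 1)
    (h : ∀ m : ℕ, m < (N + L - 1) / L → ∀ n : Fin N,
      (‖(∑ k : Fin N, ((x k * x (shiftIdx k (m * L)) : ℝ) : ℂ) *
        Complex.exp (-2 * Real.pi * Complex.I * ((k : ℕ) : ℂ) * ((n : ℕ) : ℂ) / (N : ℂ)))‖) ^ 2 =
      (‖(∑ k : Fin N, ((y k * y (shiftIdx k (m * L)) : ℝ) : ℂ) *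
        Complex.exp (-2 * Real.pi * Complex.I * ((k : ℕ) : ℂ) * ((n : ℕ) : ℂ) / (N : ℂ)))‖) ^ 2) :
    (∀ k, y k = 0 ∨ y k = 1) ∧
    (Finset.univ.filter fun k => y k ≠ 0).card =
      (Finset.univ.filter fun k => x k ≠ 0).card := by
  have hm : 0 < (N + L - 1) / L := Nat.div_pos (by have := NeZero.pos N; omega) hL
  have hdft (n : Fin N) :
      ‖dft (fun k => ((x k ^ 2 : ℝ) : ℂ)) n‖ = ‖dft (fun k => ((y k ^ 2 : ℝ) : ℂ)) n‖ := by
    have := h 0 hm n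
    simp only [zero_mul, shiftIdx_zero, ← sq] at this
    exact (sq_eq_sq₀ (norm_nonneg _) (norm_nonneg _)).mp this
  have h2 : ∑ k, x k ^ 2 = ∑ k, y k ^ 2 := by
    have := norm_sum_eq_of_norm_dft_eq hdft
    rwa [← ofReal_sum, ← ofReal_sum, norm_real, norm_real,
      Real.norm_of_nonneg (by positivity), Real.norm_of_nonneg (by positivity)] at this
  have h4 : ∑ k, x k ^ 4 = ∑ k, y k ^ 4 := by
    have := sum_norm_sq_eq_of_norm_dft_eq hdft
    simpa [← pow_mul] using this
  have hbin := eq_zero_or_one_of_sum_pow_four_eq_sum_sq hy <| by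
    rw [← h4, ← h2]
    exact Finset.sum_congr rfl fun k _ => by rcases hx k with hk | hk <;> simp [hk]
  refine ⟨hbin, ?_⟩
  exact_mod_cast (card_filter_ne_zero_eq_sum_sq hbin).trans
    (h2.symm.trans (card_filter_ne_zero_eq_sum_sq hx).symm)
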